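/- If Λ is a discrete sequence in ℂ and f ∈ A_p, then the restriction of f to Λ lies in X^{n-1}_p(Λ) for every n ≥ 1; that is, R_Λ(A_p) ⊆ X^{n-1}_p(Λ). -/

import Mathlib

open Complex Metric Set

noncomputable def divDiff : (k : ℕ) → (ℂ → ℂ) → (Fin (k+1) → ℂ) → ℂ
  | 0, ω, z => ω (z 0)
  | k+1, ω, z =>
      (divDiff k ω (fun i => z i.succ) - divDiff k ω (fun i => z i.castSucc)) /
        (z (Fin.last (k+1)) - z 0)

/-- `p` is a weight on `ℂ`: nonnegative, `p(z) ≥ K log(1+|z|²)` for some `K > 0`,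
and `p(z) ≤ D₀ p(w) + E₀` whenever `|z-w| ≤ 1`. -/
def IsWeight (p : ℂ → ℝ) : Prop :=
  (∀ z, 0 ≤ p z) ∧
  (∃ K > 0, ∀ z : ℂ, K * Real.log (1 + ‖z‖ ^ 2) ≤ p z) ∧
  (∃ D > 0, ∃ E > 0, ∀ z w : ℂ, ‖z - w‖ ≤ 1 → p z ≤ D * p w + E)

/-- `ω ∈ X^k_p(Λ)`: the divided differences of order `k` (on `k+1` distinct points of `Λ`)
are uniformly bounded with respect to the weight `p`. -/
def MemX (p : ℂ → ℝ) (Λ : Set ℂ) (k : ℕ) (ω : ℂ → ℂ) : Prop :=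
  ∃ A > 0, ∃ B > 0, ∀ z : Fin (k+1) → ℂ, (∀ i, z i ∈ Λ) → Function.Injective z →
    ‖divDiff k ω z‖ ≤ A * Real.exp (B * ∑ i, p (z i))

/-- `f ∈ A_p`: `f` is entire with `|f(z)| ≤ A e^{B p(z)}` for some `A, B > 0`. -/
def MemAp (p : ℂ → ℝ) (f : ℂ → ℂ) : Prop :=
  Differentiable ℂ f ∧ ∃ A > 0, ∃ B > 0, ∀ z, ‖f z‖ ≤ A * Real.exp (B * p z)

/-- `Λ` is interpolating for `A_p`. -/
def Interpolating (p : ℂ → ℝ) (Λ : Set ℂ) : Prop :=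
  ∀ ω : ℂ → ℂ, (∃ A > 0, ∃ B > 0, ∀ l ∈ Λ, ‖ω l‖ ≤ A * Real.exp (B * p l)) →
    ∃ f, MemAp p f ∧ ∀ l ∈ Λ, f l = ω l

/-- Uniform interpolation bounds (Lemma 2.2.6 of Berenstein–Gay). -/
def UnifInterp (p : ℂ → ℝ) (Λ : Set ℂ) : Prop :=
  ∀ A > 0, ∀ B > 0, ∃ A' > 0, ∃ B' > 0, ∀ ω : ℂ → ℂ,
    (∀ l ∈ Λ, ‖ω l‖ ≤ A * Real.exp (B * p l)) →
    ∃ f, Differentiable ℂ f ∧ (∀ z, ‖f z‖ ≤ A' * Real.exp (B' * p z)) ∧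
      ∀ l ∈ Λ, f l = ω l

/-- `Λ` is weakly separated: the disks `D(l, ε e^{-C p l})` are pairwise disjoint. -/
def WeaklySeparated (p : ℂ → ℝ) (Λ : Set ℂ) : Prop :=
  ∃ ε > 0, ∃ C > 0, ∀ l ∈ Λ, ∀ m ∈ Λ, l ≠ m →
    Disjoint (ball l (ε * Real.exp (-C * p l))) (ball m (ε * Real.exp (-C * p m)))

/-- `Λ` has no accumulation points in `ℂ`. -/
def DiscreteSet (Λ : Set ℂ) : Prop := ∀ z : ℂ, ¬ AccPt z (Filter.principal Λ)

/-!
By Hermite's formula, the divided difference of an entire function `f` at nodes `z_0, …, z_k`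
is `(2πi)⁻¹ ∮ f(w) / ∏ (w - z_i) dw` over any circle enclosing the nodes; in particular it is
symmetric in the nodes. If all nodes lie within distance `1` of `z_0`, integrating over the circle
of radius `2` about `z_0` bounds it by `2 max |f|` on that circle, and applying the weight's
local comparability `p(z) ≤ D p(w) + E` twice bounds this by `A e^{B p(z_0)}`. Otherwise, after
permuting the nodes, the first and last are at distance at least `1`, and the recursion bounds the
divided difference by two of order one less; induction on the order concludes.
-/

open Real

theorem inv_prod_succ_sub_inv_prod_castSucc {K : Type*} [Field K] {k : ℕ}
    (x : Fin (k + 2) → K) (hx : ∀ i, x i ≠ 0) :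
    (∏ i : Fin (k + 1), x i.succ)⁻¹ - (∏ i : Fin (k + 1), x i.castSucc)⁻¹ =
      (x 0 - x (Fin.last (k + 1))) * (∏ i, x i)⁻¹ := by
  have hs : ∏ i : Fin (k + 1), x i.succ ≠ 0 := Finset.prod_ne_zero_iff.mpr fun i _ => hx _
  have hc : ∏ i : Fin (k + 1), x i.castSucc ≠ 0 := Finset.prod_ne_zero_iff.mpr fun i _ => hx _
  have hsucc := Fin.prod_univ_succ x
  have hcast := Fin.prod_univ_castSucc x
  have hP : ∏ i, x i ≠ 0 := Finset.prod_ne_zero_iff.mpr fun i _ => hx i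
  field_simp
  linear_combination
    (∏ i : Fin (k + 1), x i.castSucc) * hsucc - (∏ i : Fin (k + 1), x i.succ) * hcast

theorem circleIntegrable_inv_prod_sub_mul {f : ℂ → ℂ} {c : ℂ} {R : ℝ} {n : ℕ}
    (hR : 0 ≤ R) (hf : ContinuousOn f (sphere c R)) {z : Fin n → ℂ}
    (hz : ∀ i, z i ∉ sphere c R) :
    CircleIntegrable (fun w => (∏ i, (w - z i))⁻¹ * f w) c R := by
  refine ContinuousOn.circleIntegrable hR (ContinuousOn.mul (ContinuousOn.inv₀ ?_ ?_) hf)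
  · fun_prop
  · exact fun w hw => Finset.prod_ne_zero_iff.mpr fun i _ =>
      sub_ne_zero.mpr fun h => hz i (h ▸ hw)

theorem divDiff_eq_circleIntegral {f : ℂ → ℂ} {c : ℂ} {R : ℝ}
    (hf : DiffContOnCl ℂ f (ball c R)) :
    ∀ (k : ℕ) (z : Fin (k + 1) → ℂ), Function.Injective z → (∀ i, z i ∈ ball c R) →
      divDiff k f z = (2 * π * I)⁻¹ * ∮ w in C(c, R), (∏ i, (w - z i))⁻¹ * f w := by
  intro k
  induction k with
  | zero =>
    intro z _ hz
    simpa [divDiff] using (hf.two_pi_i_inv_smul_circleIntegral_sub_inv_smul (hz 0)).symm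
  | succ k ih =>
    intro z hz hball
    have hR : 0 < R := pos_of_mem_ball (hball 0)
    have hsphere : ∀ i, z i ∉ sphere c R := fun i hi =>
      (mem_ball.mp (hball i)).ne (mem_sphere.mp hi)
    have hcont : ContinuousOn f (sphere c R) :=
      hf.continuousOn.mono (by rw [closure_ball c hR.ne']; exact sphere_subset_closedBall)
    have hsub : z (Fin.last (k + 1)) - z 0 ≠ 0 :=
      sub_ne_zero.mpr (hz.ne (Fin.last_pos.ne'))
    have hkernel : EqOn
        (fun w => (∏ i : Fin (k + 1), (w - z i.succ))⁻¹ * f w -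
          (∏ i : Fin (k + 1), (w - z i.castSucc))⁻¹ * f w)
        (fun w => (z (Fin.last (k + 1)) - z 0) • ((∏ i, (w - z i))⁻¹ * f w)) (sphere c R) := by
      intro w hw
      have hne : ∀ i, w - z i ≠ 0 := fun i h => hsphere i (sub_eq_zero.mp h ▸ hw)
      simp only [← sub_mul, inv_prod_succ_sub_inv_prod_castSucc _ hne, smul_eq_mul]
      ring
    rw [divDiff, ih (fun i => z i.succ) (hz.comp (Fin.succ_injective _)) fun i => hball _,
      ih (fun i => z i.castSucc) (hz.comp (Fin.castSucc_injective _)) fun i => hball _, ← mul_sub,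
      ← circleIntegral.integral_sub
        (circleIntegrable_inv_prod_sub_mul hR.le hcont fun i => hsphere _)
        (circleIntegrable_inv_prod_sub_mul hR.le hcont fun i => hsphere _),
      circleIntegral.integral_congr hR.le hkernel, circleIntegral.integral_smul, smul_eq_mul,
      mul_left_comm, mul_div_cancel_left₀ _ hsub]

theorem divDiff_comp_perm {f : ℂ → ℂ} (hf : Differentiable ℂ f) {k : ℕ}
    {z : Fin (k + 1) → ℂ} (hz : Function.Injective z) (σ : Equiv.Perm (Fin (k + 1))) :
    divDiff k f (z ∘ σ) = divDiff k f z := by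
  obtain ⟨R, hR⟩ : ∃ R, ∀ i, z i ∈ ball (0 : ℂ) R :=
    ⟨1 + ∑ i, ‖z i‖, fun i => mem_ball_zero_iff.mpr <| by
      linarith [Finset.single_le_sum (fun j _ => norm_nonneg (z j)) (Finset.mem_univ i)]⟩
  rw [divDiff_eq_circleIntegral hf.diffContOnCl k _ (hz.comp σ.injective) fun i => hR (σ i),
    divDiff_eq_circleIntegral hf.diffContOnCl k z hz hR]
  simp only [Function.comp_apply, fun w => Equiv.prod_comp σ fun i => w - z i]

theorem norm_divDiff_le_of_mem_ball {f : ℂ → ℂ} {c : ℂ} {R M : ℝ}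
    (hf : DiffContOnCl ℂ f (ball c R)) (hM : ∀ w ∈ sphere c R, ‖f w‖ ≤ M) {k : ℕ}
    {z : Fin (k + 1) → ℂ} (hz : Function.Injective z) (hzc : ∀ i, z i ∈ ball c (R - 1)) :
    ‖divDiff k f z‖ ≤ R * M := by
  have hR : 0 < R := by linarith [dist_nonneg.trans_lt (mem_ball.mp (hzc 0))]
  have hkernel : ∀ w ∈ sphere c R, ‖(∏ i, (w - z i))⁻¹ * f w‖ ≤ M := by
    intro w hw
    have hfar : ∀ i, 1 ≤ ‖w - z i‖ := fun i => by
      rw [← dist_eq_norm]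
      linarith [dist_triangle w (z i) c, mem_sphere.mp hw, mem_ball.mp (hzc i)]
    have hprod : 1 ≤ ‖∏ i, (w - z i)‖ := by
      rw [norm_prod]; exact Finset.one_le_prod fun i _ => hfar i
    rw [norm_mul, norm_inv]
    exact (mul_le_of_le_one_left (norm_nonneg _) (inv_le_one_of_one_le₀ hprod)).trans (hM w hw)
  rw [divDiff_eq_circleIntegral hf k z hz fun i => ball_subset_ball (by linarith) (hzc i),
    norm_mul]
  calc ‖(2 * π * I)⁻¹‖ * ‖∮ w in C(c, R), (∏ i, (w - z i))⁻¹ * f w‖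
      ≤ (2 * π)⁻¹ * (2 * π * R * M) := by
        gcongr
        · simp [abs_of_pos pi_pos]
        · exact circleIntegral.norm_integral_le_of_norm_le_const hR.le hkernel
    _ = R * M := by field_simp

theorem norm_divDiff_succ_le_of_one_le_norm_sub (f : ℂ → ℂ) {k : ℕ} {z : Fin (k + 2) → ℂ}
    (hz : 1 ≤ ‖z (Fin.last (k + 1)) - z 0‖) :
    ‖divDiff (k + 1) f z‖ ≤
      ‖divDiff k f fun i => z i.succ‖ + ‖divDiff k f fun i => z i.castSucc‖ := by
  rw [divDiff, norm_div]
  exact (div_le_self (norm_nonneg _) hz).trans (norm_sub_le _ _)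

theorem weight_le_of_norm_sub_le_two {p : ℂ → ℝ} {D E : ℝ} (hD : 0 ≤ D)
    (hDE : ∀ z w : ℂ, ‖z - w‖ ≤ 1 → p z ≤ D * p w + E) {z w : ℂ} (hw : ‖w - z‖ ≤ 2) :
    p w ≤ D * (D * p z + E) + E := by
  set m := (w + z) / 2
  have hwm : ‖w - m‖ ≤ 1 := by
    rw [show w - m = (w - z) / 2 by ring, norm_div]; norm_num; linarith
  have hmz : ‖m - z‖ ≤ 1 := by
    rw [show m - z = (w - z) / 2 by ring, norm_div]; norm_num; linarith
  linarith [hDE w m hwm, mul_le_mul_of_nonneg_left (hDE m z hmz) hD]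

theorem mul_exp_mul_le_mul_exp_mul {A A' B B' S S' : ℝ} (hA : A ≤ A') (hA' : 0 ≤ A')
    (hB : B ≤ B') (hB' : 0 ≤ B') (hS : 0 ≤ S) (hSS' : S ≤ S') :
    A * Real.exp (B * S) ≤ A' * Real.exp (B' * S') := by
  gcongr

section Weighted

variable {p : ℂ → ℝ} {f : ℂ → ℂ}

theorem MemX.mono {Λ Λ' : Set ℂ} {k : ℕ} (h : MemX p Λ k f) (hΛ : Λ' ⊆ Λ) :
    MemX p Λ' k f := by
  obtain ⟨A, hA, B, hB, hbound⟩ := h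
  exact ⟨A, hA, B, hB, fun z hz => hbound z fun i => hΛ (hz i)⟩

theorem memX_univ_zero (hf : MemAp p f) : MemX p univ 0 f := by
  obtain ⟨-, A, hA, B, hB, hbound⟩ := hf
  exact ⟨A, hA, B, hB, fun z _ _ => by simpa [divDiff] using hbound (z 0)⟩

theorem exists_norm_divDiff_le_of_forall_norm_sub_lt_one (hp : IsWeight p) (hf : MemAp p f) :
    ∃ A > 0, ∃ B > 0, ∀ (k : ℕ) (z : Fin (k + 1) → ℂ), Function.Injective z →
      (∀ i, ‖z i - z 0‖ < 1) → ‖divDiff k f z‖ ≤ A * Real.exp (B * ∑ i, p (z i)) := by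
  obtain ⟨hp0, -, D, hD, E, -, hDE⟩ := hp
  obtain ⟨hdiff, A, hA, B, hB, hbound⟩ := hf
  refine ⟨2 * A * Real.exp (B * (D * E + E)), by positivity, B * D * D, by positivity,
    fun k z hz hclose => ?_⟩
  have hsphere : ∀ w ∈ sphere (z 0) 2, ‖f w‖ ≤ A * Real.exp (B * (D * (D * p (z 0) + E) + E)) :=
    fun w hw => (hbound w).trans <| by
      gcongr
      exact weight_le_of_norm_sub_le_two hD.le hDE (mem_sphere_iff_norm.mp hw).le
  have hsum : p (z 0) ≤ ∑ i, p (z i) :=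
    Finset.single_le_sum (fun i _ => hp0 (z i)) (Finset.mem_univ 0)
  calc ‖divDiff k f z‖
      ≤ 2 * (A * Real.exp (B * (D * (D * p (z 0) + E) + E))) :=
        norm_divDiff_le_of_mem_ball hdiff.diffContOnCl hsphere hz fun i => by
          rw [mem_ball_iff_norm]; linarith [hclose i]
    _ = 2 * A * Real.exp (B * (D * E + E)) * Real.exp (B * D * D * p (z 0)) := by
        rw [mul_assoc (2 * A), ← Real.exp_add]; ring_nf
    _ ≤ 2 * A * Real.exp (B * (D * E + E)) * Real.exp (B * D * D * ∑ i, p (z i)) := by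
        gcongr

theorem memX_univ_succ (hp : IsWeight p) (hf : MemAp p f) {k : ℕ} (h : MemX p univ k f) :
    MemX p univ (k + 1) f := by
  obtain ⟨A₁, hA₁, B₁, hB₁, hprev⟩ := h
  obtain ⟨A₀, hA₀, B₀, hB₀, hclose⟩ := exists_norm_divDiff_le_of_forall_norm_sub_lt_one hp hf
  have hp0 : ∀ z, 0 ≤ p z := hp.1
  refine ⟨max A₀ (2 * A₁), by positivity, max B₀ B₁, by positivity, fun z _ hz => ?_⟩
  have hsum : 0 ≤ ∑ i, p (z i) := Finset.sum_nonneg fun i _ => hp0 (z i)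
  by_cases hnear : ∀ i, ‖z i - z 0‖ < 1
  · exact (hclose _ z hz hnear).trans <| mul_exp_mul_le_mul_exp_mul (le_max_left _ _)
      (by positivity) (le_max_left _ _) (by positivity) hsum le_rfl
  push Not at hnear
  obtain ⟨a, ha⟩ := hnear
  have ha0 : a ≠ 0 := by rintro rfl; norm_num at ha
  -- Move the point far from `z 0` to the last slot; the divided difference is symmetric.
  set y := z ∘ Equiv.swap (Fin.last (k + 1)) a
  have hy : Function.Injective y := hz.comp (Equiv.injective _)
  have hfar : 1 ≤ ‖y (Fin.last (k + 1)) - y 0‖ := by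
    simpa [y, Equiv.swap_apply_of_ne_of_ne (Fin.last_pos.ne) ha0.symm] using ha
  have hsum_y : ∑ i, p (y i) = ∑ i, p (z i) := Equiv.sum_comp _ fun i => p (z i)
  have hface : ∀ g : Fin (k + 1) → Fin (k + 2), Function.Injective g →
      ∑ i, p (y (g i)) ≤ ∑ i, p (z i) →
      ‖divDiff k f fun i => y (g i)‖ ≤ A₁ * Real.exp (B₁ * ∑ i, p (z i)) := fun g hg hle =>
    (hprev _ (fun _ => mem_univ _) (hy.comp hg)).trans <| mul_exp_mul_le_mul_exp_mul le_rfl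
      hA₁.le le_rfl hB₁.le (Finset.sum_nonneg fun i _ => hp0 _) hle
  have hsucc : ∑ i : Fin (k + 1), p (y i.succ) ≤ ∑ i, p (z i) := by
    linarith [Fin.sum_univ_succ fun i => p (y i), hp0 (y 0)]
  have hcast : ∑ i : Fin (k + 1), p (y i.castSucc) ≤ ∑ i, p (z i) := by
    linarith [Fin.sum_univ_castSucc fun i => p (y i), hp0 (y (Fin.last (k + 1)))]
  calc ‖divDiff (k + 1) f z‖ = ‖divDiff (k + 1) f y‖ := by rw [divDiff_comp_perm hf.1 hz]
    _ ≤ ‖divDiff k f fun i => y i.succ‖ + ‖divDiff k f fun i => y i.castSucc‖ :=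
        norm_divDiff_succ_le_of_one_le_norm_sub f hfar
    _ ≤ 2 * A₁ * Real.exp (B₁ * ∑ i, p (z i)) := by
        linarith [hface _ (Fin.succ_injective _) hsucc, hface _ (Fin.castSucc_injective _) hcast]
    _ ≤ max A₀ (2 * A₁) * Real.exp (max B₀ B₁ * ∑ i, p (z i)) :=
        mul_exp_mul_le_mul_exp_mul (le_max_right _ _) (by positivity) (le_max_right _ _)
          (by positivity) hsum le_rfl

theorem memX_of_memAp (hp : IsWeight p) (hf : MemAp p f) (Λ : Set ℂ) (k : ℕ) :
    MemX p Λ k f := by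
  refine MemX.mono ?_ (subset_univ Λ)
  induction k with
  | zero => exact memX_univ_zero hf
  | succ k ih => exact memX_univ_succ hp hf ih

end Weighted

theorem stmt2_general (p : ℂ → ℝ) (hp : IsWeight p) (Λ : Set ℂ)
    (f : ℂ → ℂ) (hf : MemAp p f) : ∀ k : ℕ, MemX p Λ k f :=
  memX_of_memAp hp hf Λ

theorem stmt2 (p : ℂ → ℝ) (hp : IsWeight p) (Λ : Set ℂ) (hΛd : DiscreteSet Λ)
    (f : ℂ → ℂ) (hf : MemAp p f) : ∀ k : ℕ, MemX p Λ k f :=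
  stmt2_general p hp Λ f hf
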